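/- arXiv:2010.01022 — 2 statements merged into one kernel-verified Lean document; each statement's English description precedes it below -/
import Mathlib

section
/- For every ε ∈ (0,1) there exists c = c(ε) ∈ (0,1) such that: for all n ≥ 1, l ≥ 3, every nonzero P ∈ ℤ[X] of degree < n with coefficients bounded by l, every 0 < r < ε^n 2^{-n}, and every λ ∈ ℂ with ε ≤ |λ| ≤ 1-ε and |P(λ)| ≤ r, there exists η ∈ ℂ with P(η) = 0 and |λ - η| ≤ (2^n ε^{-n} r)^{c/log l}. -/
/-!
Suppose every root of `P` is farther than `D = (2ⁿ ε⁻ⁿ r) ^ (c / log l)` from `λ`, and let `k` be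
the number of roots within `ε / 2` of `λ`. Since the leading coefficient of `P` is a nonzero
integer, factoring `P` over `ℂ` gives `D ^ k (ε / 2) ^ n ≤ |P(λ)| ≤ r`, and since
`2ⁿ ε⁻ⁿ r < 1` this forces `log l ≤ c k`. On the other hand those `k` roots lie in the disc of
radius `1 - ε / 2`, `|P| ≤ 4 l / ε` on the circle of radius `1 - ε / 4`, and the lowest nonzero
coefficient of `P` has modulus `≥ 1`, so Jensen's inequality gives `k τ ≤ log l + log (4 / ε)`
with `τ = log ((1 - ε/4) / (1 - ε/2))`. For `c` small enough in terms of `ε` the two bounds are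
incompatible.
-/

open Polynomial Metric ComplexConjugate

theorem Multiset.pow_card_le_prod_map₀ {ι R : Type*} [CommMonoidWithZero R] [PartialOrder R]
    [ZeroLEOneClass R] [PosMulMono R] {s : Multiset ι} {f : ι → R} {a : R} (ha : 0 ≤ a)
    (h : ∀ i ∈ s, a ≤ f i) : a ^ card s ≤ (s.map f).prod := by
  simpa [Multiset.map_const', Multiset.prod_replicate] using
    Multiset.prod_map_le_prod_map₀ (fun _ => a) f (fun _ _ => ha) h

theorem Multiset.norm_prod_map {α K : Type*} [NormedField K] (s : Multiset α) (f : α → K) :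
    ‖(s.map f).prod‖ = (s.map fun a => ‖f a‖).prod := by
  simpa [Multiset.map_map] using map_multiset_prod (normHom (α := K)) (s.map f)

theorem Complex.norm_ofReal_sq_sub_conj_mul {R : ℝ} {w : ℂ} (hw : ‖w‖ = R) (s : ℂ) :
    ‖(R : ℂ) ^ 2 - conj s * w‖ = R * ‖w - s‖ := by
  have hR : (R : ℂ) ^ 2 = conj w * w := by
    rw [mul_comm, mul_conj, normSq_eq_norm_sq, hw]; push_cast; ring
  rw [hR, ← sub_mul, ← map_sub, norm_mul, norm_conj, hw, mul_comm]

namespace Polynomial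

theorem norm_eval_le_of_norm_coeff_le {K : Type*} [NormedField K] {p : K[X]} {a : ℝ}
    (hp : ∀ i, ‖p.coeff i‖ ≤ a) {w : K} (hw : ‖w‖ < 1) : ‖p.eval w‖ ≤ a / (1 - ‖w‖) := by
  have ha : 0 ≤ a := (norm_nonneg _).trans (hp 0)
  rw [eval_eq_sum_range]
  calc ‖∑ i ∈ Finset.range (p.natDegree + 1), p.coeff i * w ^ i‖
      ≤ ∑ i ∈ Finset.range (p.natDegree + 1), a * ‖w‖ ^ i := by
        refine (norm_sum_le _ _).trans (Finset.sum_le_sum fun i _ => ?_)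
        rw [norm_mul, norm_pow]
        gcongr
        exact hp i
    _ ≤ a * (‖w‖ ^ 0 / (1 - ‖w‖)) := by
        rw [← Finset.mul_sum, Finset.range_eq_Ico]
        gcongr
        exact geom_sum_Ico_le_of_lt_one (norm_nonneg w) hw
    _ = a / (1 - ‖w‖) := by rw [pow_zero, mul_one_div]

theorem norm_eval_zero_mul_pow_card_le {g : ℂ[X]} {S : Multiset ℂ} (hS : S ≤ g.roots) {R M : ℝ}
    (hR : 0 < R) (hM : ∀ w ∈ sphere (0 : ℂ) R, ‖g.eval w‖ ≤ M) :
    ‖g.eval 0‖ * R ^ Multiset.card S ≤ M * ‖S.prod‖ := by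
  have hM0 : 0 ≤ M := (norm_nonneg _).trans (hM R (by simp [hR.le]))
  rcases eq_or_ne g 0 with rfl | hg
  · simpa using mul_nonneg hM0 (norm_nonneg S.prod)
  obtain ⟨q, rfl⟩ := (Multiset.prod_X_sub_C_dvd_iff_le_roots hg S).2 hS
  -- Replacing each factor `X - s` by `R ^ 2 - conj s * X` multiplies `‖g‖` by `R ^ card S`
  -- on the circle, while the value at `0` no longer sees the roots in `S`.
  set h := (S.map fun s => C ((R : ℂ) ^ 2) - C (conj s) * X).prod * q
  have hh_sphere : ∀ w ∈ sphere (0 : ℂ) R, ‖h.eval w‖ ≤ R ^ Multiset.card S * M := by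
    intro w hw
    have := hM w hw
    rw [mem_sphere_zero_iff_norm] at hw
    simp only [h, eval_mul, eval_multiset_prod, Multiset.map_map, Function.comp_def, eval_sub,
      eval_C, eval_X, norm_mul, Multiset.norm_prod_map, Complex.norm_ofReal_sq_sub_conj_mul hw,
      Multiset.prod_map_mul, Multiset.map_const', Multiset.prod_replicate] at this ⊢
    rw [mul_assoc]
    gcongr
  have hh_zero : ‖h.eval 0‖ = (R ^ 2) ^ Multiset.card S * ‖q.eval 0‖ := by
    simp [h, eval_multiset_prod, Multiset.map_map, abs_of_pos hR]
  have hq : ‖q.eval 0‖ * R ^ Multiset.card S ≤ M := by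
    have hmax : ‖h.eval 0‖ ≤ R ^ Multiset.card S * M := by
      -- the maximum modulus principle, as Cauchy's estimate of order `0`
      simpa using Complex.norm_iteratedDeriv_le_of_forall_mem_sphere_norm_le 0 hR
        h.differentiable.diffContOnCl hh_sphere
    rw [hh_zero, pow_right_comm] at hmax
    nlinarith [pow_pos hR (Multiset.card S)]
  calc ‖((S.map fun s => X - C s).prod * q).eval 0‖ * R ^ Multiset.card S
      = ‖S.prod‖ * (‖q.eval 0‖ * R ^ Multiset.card S) := by
        simp [eval_multiset_prod, Multiset.map_map, mul_assoc]
    _ ≤ M * ‖S.prod‖ := by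
        rw [mul_comm M]
        exact mul_le_mul_of_nonneg_left hq (norm_nonneg _)

theorem pow_card_filter_mul_pow_le_norm_aeval {P : ℤ[X]} (hP : P ≠ 0) {n : ℕ}
    (hdeg : P.natDegree ≤ n) {z : ℂ} {D δ : ℝ} (hD : 0 ≤ D) (hδ0 : 0 ≤ δ) (hδ1 : δ ≤ 1)
    (hfar : ∀ a ∈ P.aroots ℂ, D ≤ ‖z - a‖) :
    D ^ Multiset.card ((P.aroots ℂ).filter (‖z - ·‖ < δ)) * δ ^ n ≤ ‖aeval z P‖ := by
  set near := (P.aroots ℂ).filter (‖z - ·‖ < δ)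
  set far := (P.aroots ℂ).filter fun a => ¬ ‖z - a‖ < δ
  have hlead : 1 ≤ ‖(P.leadingCoeff : ℂ)‖ := by
    rw [Complex.norm_intCast]
    exact_mod_cast Int.one_le_abs (leadingCoeff_ne_zero.2 hP)
  have hcard : Multiset.card far ≤ n :=
    (Multiset.card_le_card (Multiset.filter_le _ _)).trans
      ((card_roots' _).trans (natDegree_map_le.trans hdeg))
  have hnear : D ^ Multiset.card near ≤ (near.map (‖z - ·‖)).prod :=
    Multiset.pow_card_le_prod_map₀ hD fun a ha => hfar a (Multiset.mem_of_mem_filter ha)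
  have hfar : δ ^ n ≤ (far.map (‖z - ·‖)).prod :=
    (pow_le_pow_of_le_one hδ0 hδ1 hcard).trans <|
      Multiset.pow_card_le_prod_map₀ hδ0 fun a ha => le_of_not_gt (Multiset.mem_filter.1 ha).2
  calc D ^ Multiset.card near * δ ^ n
      ≤ (near.map (‖z - ·‖)).prod * (far.map (‖z - ·‖)).prod :=
        mul_le_mul hnear hfar (by positivity) (Multiset.prod_map_nonneg fun _ _ => norm_nonneg _)
    _ = ((P.aroots ℂ).map (‖z - ·‖)).prod := by
        rw [← Multiset.prod_add, ← Multiset.map_add, Multiset.filter_add_not]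
    _ ≤ ‖(P.leadingCoeff : ℂ)‖ * ((P.aroots ℂ).map (‖z - ·‖)).prod :=
        le_mul_of_one_le_left (Multiset.prod_map_nonneg fun _ _ => norm_nonneg _) hlead
    _ = ‖aeval z P‖ := by
        rw [← eval_map_algebraMap, (IsAlgClosed.splits _).eval_eq_prod_roots,
          leadingCoeff_map_of_injective (algebraMap ℤ ℂ).injective_int, norm_mul,
          Multiset.norm_prod_map]
        rfl

theorem pow_card_le_of_le_aroots {P : ℤ[X]} (hP : P ≠ 0) {l : ℤ} (hcoeff : ∀ i, |P.coeff i| ≤ l)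
    {S : Multiset ℂ} (hS : S ≤ P.aroots ℂ) (hS0 : 0 ∉ S) {R ρ : ℝ} (hR0 : 0 < R) (hR1 : R < 1)
    (hρ : ∀ s ∈ S, ‖s‖ ≤ ρ) :
    R ^ Multiset.card S ≤ l / (1 - R) * ρ ^ Multiset.card S := by
  obtain ⟨m, Q, rfl, hQ0⟩ : ∃ m, ∃ Q : ℤ[X], P = X ^ m * Q ∧ Q.eval 0 ≠ 0 :=
    ⟨_, _, by simpa using (pow_mul_divByMonic_rootMultiplicity_eq P 0).symm,
      by simpa using eval_divByMonic_pow_rootMultiplicity_ne_zero 0 hP⟩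
  have hSQ : S ≤ Q.aroots ℂ := by
    rw [aroots_mul hP, aroots_X_pow, Multiset.le_iff_count] at hS
    rw [Multiset.le_iff_count]
    intro a
    rcases eq_or_ne a 0 with rfl | ha
    · simp [Multiset.count_eq_zero.2 hS0]
    · simpa [Multiset.count_singleton, ha] using hS a
  have hM : ∀ w ∈ sphere (0 : ℂ) R, ‖(Q.map (algebraMap ℤ ℂ)).eval w‖ ≤ l / (1 - R) := by
    intro w hw
    rw [mem_sphere_zero_iff_norm] at hw
    rw [← hw]
    refine norm_eval_le_of_norm_coeff_le (fun i => ?_) (hw ▸ hR1)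
    rw [coeff_map, eq_intCast, Complex.norm_intCast]
    have := hcoeff (i + m)
    rw [coeff_X_pow_mul] at this
    exact_mod_cast this
  have hQ_one_le : 1 ≤ ‖(Q.map (algebraMap ℤ ℂ)).eval 0‖ := by
    rw [eval_zero_map, eq_intCast, Complex.norm_intCast]
    exact_mod_cast Int.one_le_abs hQ0
  have hprod : ‖S.prod‖ ≤ ρ ^ Multiset.card S :=
    calc ‖S.prod‖ = (S.map (‖·‖)).prod := by simpa using Multiset.norm_prod_map S id
      _ ≤ (S.map fun _ => ρ).prod :=
        Multiset.prod_map_le_prod_map₀ _ _ (fun _ _ => norm_nonneg _) hρ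
      _ = ρ ^ Multiset.card S := by simp [Multiset.map_const', Multiset.prod_replicate]
  have hM0 : (0 : ℝ) ≤ l / (1 - R) := by
    have : (0 : ℤ) ≤ l := (abs_nonneg _).trans (hcoeff 0)
    exact div_nonneg (by exact_mod_cast this) (by linarith)
  calc R ^ Multiset.card S ≤ ‖(Q.map (algebraMap ℤ ℂ)).eval 0‖ * R ^ Multiset.card S :=
        le_mul_of_one_le_left (pow_nonneg hR0.le _) hQ_one_le
    _ ≤ l / (1 - R) * ‖S.prod‖ := norm_eval_zero_mul_pow_card_le hSQ hR0 hM
    _ ≤ l / (1 - R) * ρ ^ Multiset.card S := mul_le_mul_of_nonneg_left hprod hM0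

end Polynomial

noncomputable def rootGap (ε : ℝ) : ℝ := Real.log ((1 - ε / 4) / (1 - ε / 2))

theorem rootGap_pos {ε : ℝ} (hε0 : 0 < ε) (hε1 : ε < 1) : 0 < rootGap ε :=
  Real.log_pos ((one_lt_div (by linarith)).2 (by linarith))

theorem log_four_div_pos {ε : ℝ} (hε0 : 0 < ε) (hε1 : ε < 1) : 0 < Real.log (4 / ε) :=
  Real.log_pos ((one_lt_div hε0).2 (by linarith))

theorem card_filter_mul_log_le {P : ℤ[X]} (hP : P ≠ 0) {l : ℕ} (hl : 0 < l)
    (hcoeff : ∀ i, |P.coeff i| ≤ (l : ℤ)) {ε : ℝ} (hε0 : 0 < ε) (hε1 : ε < 1) {lam : ℂ}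
    (hlam₀ : ε ≤ ‖lam‖) (hlam₁ : ‖lam‖ ≤ 1 - ε) :
    Multiset.card ((P.aroots ℂ).filter (‖lam - ·‖ < ε / 2)) * rootGap ε ≤
      Real.log l + Real.log (4 / ε) := by
  set S := (P.aroots ℂ).filter (‖lam - ·‖ < ε / 2)
  have hR : 0 < 1 - ε / 4 := by linarith
  have hρ : 0 < 1 - ε / 2 := by linarith
  have hS0 : 0 ∉ S := fun h => by
    have := (Multiset.mem_filter.1 h).2
    rw [sub_zero] at this
    linarith
  have hSρ : ∀ s ∈ S, ‖s‖ ≤ 1 - ε / 2 := fun s hs => by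
    have := (Multiset.mem_filter.1 hs).2
    linarith [norm_le_norm_add_norm_sub' s lam, norm_sub_rev lam s]
  have hJ := pow_card_le_of_le_aroots hP hcoeff (Multiset.filter_le _ _) hS0
    (R := 1 - ε / 4) hR (by linarith) hSρ
  have hratio : ((1 - ε / 4) / (1 - ε / 2)) ^ Multiset.card S ≤ l * (4 / ε) := by
    rw [div_pow, div_le_iff₀ (by positivity)]
    have hM : ((l : ℤ) : ℝ) / (1 - (1 - ε / 4)) = l * (4 / ε) := by
      rw [Int.cast_natCast, sub_sub_cancel, div_div_eq_mul_div, mul_div_assoc]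
    rwa [hM] at hJ
  have := Real.log_le_log (by positivity) hratio
  rwa [Real.log_pow, Real.log_mul (by positivity) (by positivity)] at this

/-- The cap `1 / 2` is only there to make `c < 1`. -/
noncomputable def rootExponent (ε : ℝ) : ℝ :=
  min (1 / 2) (rootGap ε * Real.log 3 / (2 * (Real.log 3 + Real.log (4 / ε))))

theorem rootExponent_mem_Ioo {ε : ℝ} (hε0 : 0 < ε) (hε1 : ε < 1) :
    rootExponent ε ∈ Set.Ioo 0 1 := by
  have := rootGap_pos hε0 hε1
  have := log_four_div_pos hε0 hε1
  have : 0 < Real.log 3 := Real.log_pos (by norm_num)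
  exact ⟨lt_min (by norm_num) (by positivity), (min_le_left _ _).trans_lt (by norm_num)⟩

theorem rootExponent_mul_lt {ε : ℝ} (hε0 : 0 < ε) (hε1 : ε < 1) {L : ℝ}
    (hL : Real.log 3 ≤ L) :
    rootExponent ε * (L + Real.log (4 / ε)) < rootGap ε * L := by
  set τ := rootGap ε
  set G := Real.log (4 / ε)
  have hτ : 0 < τ := rootGap_pos hε0 hε1
  have hG : 0 < G := log_four_div_pos hε0 hε1
  have h3 : 0 < Real.log 3 := Real.log_pos (by norm_num)
  have hc : rootExponent ε * (2 * (Real.log 3 + G)) ≤ τ * Real.log 3 :=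
    (le_div_iff₀ (by positivity)).1 (min_le_right _ _)
  nlinarith [mul_le_mul_of_nonneg_right hc (by linarith : 0 ≤ L + G),
    mul_le_mul_of_nonneg_left (mul_le_mul_of_nonneg_right hL hG.le) hτ.le,
    mul_pos (mul_pos hτ (h3.trans_le hL)) (by positivity : 0 < Real.log 3 + G)]

/-- A nonzero integer polynomial of degree `< n` with coefficients bounded by `l ≥ 3`
which is small at a point `λ` with `ε ≤ |λ| ≤ 1-ε` has a root near `λ`. -/
theorem stmt2 (ε : ℝ) (hε : ε ∈ Set.Ioo (0 : ℝ) 1) :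
    ∃ c ∈ Set.Ioo (0 : ℝ) 1, ∀ n l : ℕ, 1 ≤ n → 3 ≤ l →
      ∀ P : Polynomial ℤ, P ≠ 0 → P.natDegree < n → (∀ i, |P.coeff i| ≤ (l : ℤ)) →
      ∀ r : ℝ, 0 < r → r < ε ^ n * (2 : ℝ) ^ (-(n : ℝ)) →
      ∀ lam : ℂ, ε ≤ ‖lam‖ → ‖lam‖ ≤ 1 - ε →
      ‖aeval lam P‖ ≤ r →
      ∃ η : ℂ, aeval η P = 0 ∧
        ‖lam - η‖ ≤ ((2 : ℝ) ^ (n : ℝ) * ε ^ (-(n : ℝ)) * r) ^ (c / Real.log l) := by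
  obtain ⟨hε0, hε1⟩ := hε
  set c := rootExponent ε
  refine ⟨c, rootExponent_mem_Ioo hε0 hε1, fun n l _ hl P hP hdeg hcoeff r hr hrn lam hlam₀ hlam₁
    hPlam => ?_⟩
  by_contra! hfar
  set L := Real.log l
  set B := (2 : ℝ) ^ (n : ℝ) * ε ^ (-(n : ℝ)) * r
  set k := Multiset.card ((P.aroots ℂ).filter (‖lam - ·‖ < ε / 2))
  have hL : Real.log 3 ≤ L := Real.log_le_log (by norm_num) (by exact_mod_cast hl)
  have hL0 : 0 < L := (Real.log_pos (by norm_num)).trans_le hL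
  have hB : B = r / (ε / 2) ^ n := by
    simp only [B]
    rw [Real.rpow_natCast, Real.rpow_neg hε0.le, Real.rpow_natCast, div_pow]
    field_simp
  have hB0 : 0 < B := hB ▸ by positivity
  have hB1 : B < 1 := by
    rw [hB, div_lt_one (by positivity), div_pow, div_eq_mul_inv, ← Real.rpow_natCast 2,
      ← Real.rpow_neg zero_le_two]
    exact hrn
  have hfactor : (B ^ (c / L)) ^ k * (ε / 2) ^ n ≤ r :=
    (pow_card_filter_mul_pow_le_norm_aeval hP hdeg.le (by positivity) (by positivity)
      (by linarith) fun a ha => (hfar a (mem_aroots.1 ha).2).le).trans hPlam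
  have hLk : L ≤ c * k := by
    have : B ^ (c / L * k) ≤ B ^ (1 : ℝ) := by
      rw [Real.rpow_mul hB0.le, Real.rpow_natCast, Real.rpow_one]
      exact ((le_div_iff₀ (by positivity)).2 hfactor).trans_eq hB.symm
    have := (Real.rpow_le_rpow_left_iff_of_base_lt_one hB0 hB1).1 this
    rwa [div_mul_eq_mul_div, one_le_div hL0] at this
  have hjensen := card_filter_mul_log_le hP (by omega) hcoeff hε0 hε1 hlam₀ hlam₁
  have hτ := rootGap_pos hε0 hε1
  have hc := (rootExponent_mem_Ioo hε0 hε1).1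
  linarith [rootExponent_mul_lt hε0 hε1 hL, mul_le_mul_of_nonneg_right hLk hτ.le,
    mul_le_mul_of_nonneg_left hjensen hc.le]
end

section
/- Let λ ∈ (0,1) and let μ_λ be the self-similar measure associated to the IFS {x ↦ λx + a_j : j = 1,…,m} with distinct integers a_j and probability weights p_j, i.e. the law of Σ_{j≥0} a_{ξ_j} λ^j with ξ_j i.i.d. with law p. Let μ_λ^{(n)} be the law of the truncated sum Σ_{j<n} a_{ξ_j} λ^j. Then dim μ_λ ≤ H(μ_λ^{(n)}) / (n log λ^{-1}) for all n ≥ 1. -/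
open Filter MeasureTheory

/-- Shannon entropy of a discrete probability measure. -/
noncomputable def pmfEntropy {α : Type*} (q : PMF α) : ℝ :=
  ∑' a, Real.negMulLog ((q a).toReal)

/-- The law `μ_λ^{(n)}` of the truncated sum `Σ_{j<n} a_{ξ_j} λ^j`, via the recursion
`μ^{(n+1)} = law of a_{ξ_0} + λ·(independent copy of μ^{(n)})`. -/
noncomputable def truncLaw {m : ℕ} (ξ : PMF (Fin m)) (lam : ℝ) (a : Fin m → ℤ) :
    ℕ → PMF ℝ
  | 0 => PMF.pure 0
  | n + 1 => ξ.bind fun j => (truncLaw ξ lam a n).map fun x => ((a j : ℤ) : ℝ) + lam * x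

/-!
Write `q = μ_λ^{(n)}` and `β = λ^n`. Iterating the self-similarity `n` times gives
`μ = Σ_s q(s) · (x ↦ s + βx)_* μ`, hence `μ(B(s + βy, βr)) ≥ q(s) μ(B(y, r))`. Integrating
`-log μ(B(x, Rβ^k))` against this decomposition and inducting on `k` gives
`∫ -log μ(B(x, Rβ^k)) dμ ≤ k H(q)`, once `R` is so large that balls of radius `R` around
`μ`-typical points have full mass (`μ` is compactly supported, by a contraction argument).
Since `-log μ(B(x, Rβ^k)) / k → d log β⁻¹` for `μ`-a.e. `x`, Fatou's lemma yields
`d · n log λ⁻¹ ≤ H(q)`.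
-/

open Metric Set
open scoped ENNReal Topology

namespace PMF

variable {α β : Type*}

lemma tsum_bind_mul (p : PMF α) (f : α → PMF β) (w : β → ℝ≥0∞) :
    ∑' b, p.bind f b * w b = ∑' a, p a * ∑' b, f a b * w b := by
  simp_rw [bind_apply, ← ENNReal.tsum_mul_right, ← ENNReal.tsum_mul_left, mul_assoc]
  exact ENNReal.tsum_comm

lemma tsum_map_mul (p : PMF α) (f : α → β) (w : β → ℝ≥0∞) :
    ∑' b, p.map f b * w b = ∑' a, p a * w (f a) := by
  classical
  simp_rw [map_apply, ← ENNReal.tsum_mul_right]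
  rw [ENNReal.tsum_comm]
  refine tsum_congr fun a => ?_
  simp_rw [ite_mul, zero_mul]
  exact tsum_ite_eq (f a) _

lemma negMulLog_toReal_nonneg (q : PMF α) (s : α) : 0 ≤ Real.negMulLog (q s).toReal :=
  Real.negMulLog_nonneg ENNReal.toReal_nonneg
    (ENNReal.toReal_le_of_le_ofReal zero_le_one (by simpa using q.coe_le_one s))

lemma ofReal_pmfEntropy (q : PMF α) (hq : q.support.Finite) :
    ENNReal.ofReal (pmfEntropy q) = ∑' s, q s * ENNReal.ofReal (-Real.log (q s).toReal) := by
  have hzero {s} (hs : s ∉ hq.toFinset) : q s = 0 := by simpa using hs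
  rw [pmfEntropy, tsum_eq_sum (s := hq.toFinset) fun s hs => by simp [hzero hs],
    tsum_eq_sum (s := hq.toFinset) fun s hs => by simp [hzero hs],
    ENNReal.ofReal_sum_of_nonneg fun s _ => negMulLog_toReal_nonneg q s]
  refine Finset.sum_congr rfl fun s _ => ?_
  rw [Real.negMulLog, neg_mul, ← mul_neg, ENNReal.ofReal_mul ENNReal.toReal_nonneg,
    ENNReal.ofReal_toReal (q.apply_ne_top s)]

lemma pmfEntropy_nonneg (q : PMF α) : 0 ≤ pmfEntropy q :=
  tsum_nonneg (negMulLog_toReal_nonneg q)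

end PMF

lemma MeasureTheory.Measure.apply_eq_sum_of_eq_sum_smul_map {ι X : Type*} [Fintype ι]
    [MeasurableSpace X] {μ : Measure X} {w : ι → ℝ≥0∞} {g : ι → X → X}
    (hg : ∀ j, Measurable (g j)) (h : μ = ∑ j, w j • μ.map (g j)) {A : Set X}
    (hA : MeasurableSet A) : μ A = ∑ j, w j * μ (g j ⁻¹' A) := by
  conv_lhs => rw [h]
  simp only [Measure.coe_finsetSum, Finset.sum_apply, Measure.smul_apply, smul_eq_mul,
    Measure.map_apply (hg _) hA]

section SelfSimilar

variable {ι : Type*} [Fintype ι] {p : PMF ι} {lam : ℝ} {t : ι → ℝ} {μ : Measure ℝ}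

lemma measure_abs_gt_le_of_selfSimilar (hlam : 0 < lam)
    (hself : μ = ∑ j, p j • μ.map fun x => lam * x + t j) {A : ℝ} (hA : ∀ j, |t j| ≤ A)
    (c : ℝ) : μ {x | c < |x|} ≤ μ {x | (c - A) / lam < |x|} := by
  have hmeas (c : ℝ) : MeasurableSet {x : ℝ | c < |x|} :=
    measurableSet_lt measurable_const measurable_abs
  rw [Measure.apply_eq_sum_of_eq_sum_smul_map (fun j => by fun_prop) hself (hmeas c)]
  calc ∑ j, p j * μ ((fun x => lam * x + t j) ⁻¹' {x | c < |x|})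
      ≤ ∑ j, p j * μ {x | (c - A) / lam < |x|} := by
        refine Finset.sum_le_sum fun j _ => mul_le_mul_right (measure_mono fun y hy => ?_) _
        have : |lam * y + t j| ≤ lam * |y| + A := by
          grw [abs_add_le, abs_mul, abs_of_pos hlam, hA j]
        simp only [mem_preimage, mem_ofPred_eq] at hy ⊢
        rw [div_lt_iff₀' hlam]
        linarith
    _ = μ {x | (c - A) / lam < |x|} := by
        rw [← Finset.sum_mul, ← tsum_fintype (L := .unconditional _), p.tsum_coe, one_mul]

lemma ae_abs_le_of_selfSimilar [IsProbabilityMeasure μ] (hlam : lam ∈ Ioo 0 1)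
    (hself : μ = ∑ j, p j • μ.map fun x => lam * x + t j) {A : ℝ} (hA : ∀ j, |t j| ≤ A)
    {c : ℝ} (hc : A / (1 - lam) < c) : ∀ᵐ x ∂μ, |x| ≤ c := by
  obtain ⟨hlam0, hlam1⟩ := hlam
  set M := A / (1 - lam)
  have hM : M - A = lam * M := by
    simp only [M]
    field_simp [(sub_pos.2 hlam1).ne']
    ring
  have hiter (k : ℕ) (δ : ℝ) : μ {x | M + δ < |x|} ≤ μ {x | M + δ / lam ^ k < |x|} := by
    induction k generalizing δ with
    | zero => simp
    | succ k ih =>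
      have hstep : (M + δ - A) / lam = M + δ / lam := by
        field_simp
        linarith
      calc μ {x | M + δ < |x|} ≤ μ {x | M + δ / lam < |x|} :=
            hstep ▸ measure_abs_gt_le_of_selfSimilar hlam0 hself hA _
        _ ≤ μ {x | M + δ / lam ^ (k + 1) < |x|} := by
            rw [pow_succ', ← div_div]
            exact ih _
  have htail : Tendsto (fun r : ℝ => μ {x | r < |x|}) atTop (𝓝 0) := by
    simpa using tendsto_measure_norm_gt_of_isTightMeasureSet (isTightMeasureSet_singleton (μ := μ))
  have hradius : Tendsto (fun k : ℕ => M + (c - M) / lam ^ k) atTop atTop := by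
    refine tendsto_atTop_add_const_left _ _ ?_
    simp_rw [div_eq_mul_inv, ← inv_pow]
    exact (tendsto_pow_atTop_atTop_of_one_lt (one_lt_inv₀ hlam0 |>.2 hlam1)).const_mul_atTop
      (sub_pos.2 hc)
  have hnull : μ {x | c < |x|} = 0 := by
    refine le_antisymm ?_ zero_le
    simpa using ge_of_tendsto' (htail.comp hradius) (hiter · (c - M))
  simpa [ae_iff] using hnull

end SelfSimilar

section TruncLaw

variable {m : ℕ} {ξ : PMF (Fin m)} {lam : ℝ} {a : Fin m → ℤ}

lemma truncLaw_support_finite (n : ℕ) : (truncLaw ξ lam a n).support.Finite := by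
  induction n with
  | zero => simp [truncLaw]
  | succ n ih =>
    rw [truncLaw, PMF.support_bind]
    exact (Set.toFinite _).biUnion fun j _ => by rw [PMF.support_map]; exact ih.image _

lemma measure_eq_tsum_truncLaw {μ : Measure ℝ}
    (hself : μ = ∑ j, ξ j • μ.map fun x => lam * x + ((a j : ℤ) : ℝ)) (n : ℕ) {A : Set ℝ}
    (hA : MeasurableSet A) :
    μ A = ∑' s, truncLaw ξ lam a n s * μ ((fun x => s + lam ^ n * x) ⁻¹' A) := by
  induction n generalizing A with
  | zero => simp [truncLaw, PMF.pure_apply]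
  | succ n ih =>
    have hmeas (j : Fin m) : Measurable fun x : ℝ => lam * x + a j := by fun_prop
    rw [truncLaw, PMF.tsum_bind_mul, tsum_fintype,
      Measure.apply_eq_sum_of_eq_sum_smul_map hmeas hself hA]
    refine Finset.sum_congr rfl fun j _ => ?_
    rw [ih (hmeas j hA), PMF.tsum_map_mul]
    congr! 5 with s
    ext x
    simp only [mem_preimage]
    ring_nf

lemma eq_sum_truncLaw_smul_map {μ : Measure ℝ}
    (hself : μ = ∑ j, ξ j • μ.map fun x => lam * x + ((a j : ℤ) : ℝ)) (n : ℕ) :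
    μ = Measure.sum fun s => truncLaw ξ lam a n s • μ.map fun x => s + lam ^ n * x := by
  ext A hA
  rw [measure_eq_tsum_truncLaw hself n hA, Measure.sum_apply _ hA]
  refine tsum_congr fun s => ?_
  rw [Measure.smul_apply, Measure.map_apply (by fun_prop) hA, smul_eq_mul]

end TruncLaw

section BallMass

noncomputable def negLogBallMass (μ : Measure ℝ) (r x : ℝ) : ℝ :=
  -Real.log (μ (closedBall x r)).toReal

variable {μ : Measure ℝ}

lemma measurable_measure_closedBall [SFinite μ] (r : ℝ) :
    Measurable fun x => μ (closedBall x r) :=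
  measurable_measure_prodMk_left (s := {p : ℝ × ℝ | dist p.2 p.1 ≤ r})
    (measurableSet_le (by fun_prop) measurable_const)

lemma measurable_negLogBallMass [SFinite μ] (r : ℝ) : Measurable (negLogBallMass μ r) :=
  (Real.measurable_log.comp (measurable_measure_closedBall r).ennreal_toReal).neg

lemma ae_measure_closedBall_pos : ∀ᵐ y ∂μ, ∀ r : ℝ, 0 < r → 0 < μ (closedBall y r) := by
  filter_upwards [Measure.support_mem_ae] with y hy r hr
  exact (Measure.mem_support_iff_forall y).1 hy _ (closedBall_mem_nhds y hr)

lemma ae_measure_closedBall_eq_one [IsProbabilityMeasure μ] {c : ℝ}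
    (hc : ∀ᵐ x ∂μ, |x| ≤ c) : ∀ᵐ x ∂μ, μ (closedBall x (2 * c)) = 1 := by
  have hball : μ (closedBall 0 c) = 1 :=
    (prob_compl_eq_zero_iff measurableSet_closedBall).1
      (measure_mono_null (fun x hx => by simpa using hx) (ae_iff.1 hc))
  filter_upwards [hc] with x hx
  refine le_antisymm prob_le_one (hball ▸ measure_mono fun y hy => ?_)
  rw [mem_closedBall_zero_iff, Real.norm_eq_abs] at hy
  rw [mem_closedBall, Real.dist_eq]
  linarith [abs_sub y x]

end BallMass

section Decomposition

variable {μ : Measure ℝ} {q : PMF ℝ} {β : ℝ}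

lemma lintegral_eq_tsum_of_eq_sum_smul_map
    (hdec : μ = Measure.sum fun s => q s • μ.map fun x => s + β * x) {f : ℝ → ℝ≥0∞}
    (hf : Measurable f) : ∫⁻ x, f x ∂μ = ∑' s, q s * ∫⁻ y, f (s + β * y) ∂μ := by
  conv_lhs => rw [hdec]
  rw [lintegral_sum_measure]
  refine tsum_congr fun s => ?_
  rw [lintegral_smul_measure, lintegral_map hf (by fun_prop), smul_eq_mul]

lemma mul_measure_closedBall_le_of_eq_sum_smul_map
    (hdec : μ = Measure.sum fun s => q s • μ.map fun x => s + β * x) (hβ : 0 < β)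
    (s y r : ℝ) : q s * μ (closedBall y r) ≤ μ (closedBall (s + β * y) (β * r)) := by
  have hsub : closedBall y r ⊆ (fun x => s + β * x) ⁻¹' closedBall (s + β * y) (β * r) := by
    intro z hz
    rw [mem_preimage, mem_closedBall, Real.dist_eq, add_sub_add_left_eq_sub, ← mul_sub,
      abs_mul, abs_of_pos hβ]
    exact mul_le_mul_of_nonneg_left hz hβ.le
  calc q s * μ (closedBall y r)
      ≤ (q s • μ.map fun x => s + β * x) (closedBall (s + β * y) (β * r)) := by
        rw [Measure.smul_apply, Measure.map_apply (by fun_prop) measurableSet_closedBall]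
        exact mul_le_mul_right (measure_mono hsub) _
    _ ≤ μ (closedBall (s + β * y) (β * r)) := by
        conv_rhs => rw [hdec]
        exact Measure.le_sum (fun s => q s • μ.map fun x => s + β * x) s _

lemma negLogBallMass_add_mul_le [IsFiniteMeasure μ]
    (hdec : μ = Measure.sum fun s => q s • μ.map fun x => s + β * x) (hβ : 0 < β)
    {s : ℝ} (hs : q s ≠ 0) {y r : ℝ} (hy : 0 < μ (closedBall y r)) :
    negLogBallMass μ (β * r) (s + β * y) ≤ -Real.log (q s).toReal + negLogBallMass μ r y := by
  have hmass := ENNReal.toReal_mono (measure_ne_top μ _)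
    (mul_measure_closedBall_le_of_eq_sum_smul_map hdec hβ s y r)
  rw [ENNReal.toReal_mul] at hmass
  have hq : 0 < (q s).toReal := ENNReal.toReal_pos hs (q.apply_ne_top s)
  have hball : 0 < (μ (closedBall y r)).toReal := ENNReal.toReal_pos hy.ne' (measure_ne_top μ _)
  have hlog := Real.log_le_log (by positivity) hmass
  rw [Real.log_mul hq.ne' hball.ne'] at hlog
  simp only [negLogBallMass]
  linarith

lemma lintegral_negLogBallMass_le [IsProbabilityMeasure μ]
    (hdec : μ = Measure.sum fun s => q s • μ.map fun x => s + β * x) (hβ : 0 < β)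
    {R : ℝ} (hR0 : 0 < R) (hR : ∀ᵐ x ∂μ, μ (closedBall x R) = 1) (k : ℕ) :
    ∫⁻ x, ENNReal.ofReal (negLogBallMass μ (R * β ^ k) x) ∂μ
      ≤ k * ∑' s, q s * ENNReal.ofReal (-Real.log (q s).toReal) := by
  set H := ∑' s, q s * ENNReal.ofReal (-Real.log (q s).toReal)
  induction k with
  | zero =>
    refine (lintegral_congr_ae (g := 0) ?_).trans_le (by simp)
    filter_upwards [hR] with x hx
    simp [negLogBallMass, hx]
  | succ k ih =>
    set I := ∫⁻ x, ENNReal.ofReal (negLogBallMass μ (R * β ^ k) x) ∂μ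
    have hradius : R * β ^ (k + 1) = β * (R * β ^ k) := by ring
    have hstep (s : ℝ) (hs : q s ≠ 0) :
        ∫⁻ y, ENNReal.ofReal (negLogBallMass μ (R * β ^ (k + 1)) (s + β * y)) ∂μ
          ≤ ENNReal.ofReal (-Real.log (q s).toReal) + I := by
      calc ∫⁻ y, ENNReal.ofReal (negLogBallMass μ (R * β ^ (k + 1)) (s + β * y)) ∂μ
          ≤ ∫⁻ y, (ENNReal.ofReal (-Real.log (q s).toReal)
              + ENNReal.ofReal (negLogBallMass μ (R * β ^ k) y)) ∂μ := by
            refine lintegral_mono_ae ?_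
            filter_upwards [ae_measure_closedBall_pos] with y hy
            rw [hradius]
            exact (ENNReal.ofReal_le_ofReal (negLogBallMass_add_mul_le hdec hβ hs
              (hy _ (by positivity)))).trans ENNReal.ofReal_add_le
        _ = ENNReal.ofReal (-Real.log (q s).toReal) + I := by
            rw [lintegral_add_left measurable_const, lintegral_const, measure_univ, mul_one]
    calc ∫⁻ x, ENNReal.ofReal (negLogBallMass μ (R * β ^ (k + 1)) x) ∂μ
        = ∑' s, q s * ∫⁻ y, ENNReal.ofReal (negLogBallMass μ (R * β ^ (k + 1)) (s + β * y)) ∂μ :=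
          lintegral_eq_tsum_of_eq_sum_smul_map hdec (measurable_negLogBallMass _).ennreal_ofReal
      _ ≤ ∑' s, q s * (ENNReal.ofReal (-Real.log (q s).toReal) + I) := by
          refine ENNReal.tsum_le_tsum fun s => ?_
          by_cases hs : q s = 0
          · simp [hs]
          · exact mul_le_mul_right (hstep s hs) _
      _ = H + I := by
          simp_rw [mul_add]
          rw [ENNReal.tsum_add, ENNReal.tsum_mul_right, q.tsum_coe, one_mul]
      _ ≤ H + k * H := by grw [ih]
      _ = (k + 1 : ℕ) * H := by push_cast; ring

end Decomposition

lemma tendsto_neg_log_div_nat_of_tendsto_log_div_log {g : ℝ → ℝ} {d : ℝ}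
    (hg : Tendsto (fun r => Real.log (g r) / Real.log r) (𝓝[>] 0) (𝓝 d)) {R β : ℝ}
    (hR : 0 < R) (hβ : β ∈ Ioo 0 1) :
    Tendsto (fun k : ℕ => -Real.log (g (R * β ^ k)) / k) atTop (𝓝 (d * Real.log β⁻¹)) := by
  obtain ⟨hβ0, hβ1⟩ := hβ
  have hradius : Tendsto (fun k : ℕ => R * β ^ k) atTop (𝓝[>] 0) := by
    refine tendsto_nhdsWithin_iff.2 ⟨?_, .of_forall fun k => mem_Ioi.2 (by positivity)⟩
    simpa using (tendsto_pow_atTop_nhds_zero_of_lt_one hβ0.le hβ1).const_mul R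
  have hlog (k : ℕ) : -Real.log (R * β ^ k) = -Real.log R + k * Real.log β⁻¹ := by
    rw [Real.log_mul hR.ne' (by positivity), Real.log_pow, Real.log_inv]
    ring
  have hrate : Tendsto (fun k : ℕ => -Real.log (R * β ^ k) / k) atTop (𝓝 (Real.log β⁻¹)) := by
    have := (tendsto_const_div_atTop_nhds_zero_nat (-Real.log R)).add_const (Real.log β⁻¹)
    rw [zero_add] at this
    refine this.congr' ?_
    filter_upwards [eventually_ne_atTop 0] with k hk
    rw [hlog, add_div, mul_div_cancel_left₀ _ (Nat.cast_ne_zero.2 hk)]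
  refine ((hg.comp hradius).mul hrate).congr' ?_
  filter_upwards [hradius.eventually (Ioo_mem_nhdsGT zero_lt_one)] with k hk
  have : Real.log (R * β ^ k) ≠ 0 := (Real.log_neg hk.1 hk.2).ne
  simp only [Function.comp_apply]
  field_simp

lemma ofReal_le_of_lintegral_le_nat_mul {X : Type*} [MeasurableSpace X] {μ : Measure X}
    [IsProbabilityMeasure μ] {u : ℕ → X → ℝ} (hu : ∀ k, Measurable (u k)) {H : ℝ≥0∞}
    (hint : ∀ k : ℕ, ∫⁻ x, ENNReal.ofReal (u k x) ∂μ ≤ k * H) {c : ℝ}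
    (hlim : ∀ᵐ x ∂μ, Tendsto (fun k : ℕ => u k x / k) atTop (𝓝 c)) :
    ENNReal.ofReal c ≤ H := by
  set f : ℕ → X → ℝ≥0∞ := fun k x => (k : ℝ≥0∞)⁻¹ * ENNReal.ofReal (u k x)
  have hf_lim : ∀ᵐ x ∂μ, Tendsto (fun k => f k x) atTop (𝓝 (ENNReal.ofReal c)) := by
    filter_upwards [hlim] with x hx
    refine ((ENNReal.continuous_ofReal.tendsto _).comp hx).congr' ?_
    filter_upwards [eventually_gt_atTop 0] with k hk
    rw [Function.comp_apply, ENNReal.ofReal_div_of_pos (by exact_mod_cast hk),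
      ENNReal.ofReal_natCast, ENNReal.div_eq_inv_mul]
  have hf_int (k : ℕ) (hk : k ≠ 0) : ∫⁻ x, f k x ∂μ ≤ H := by
    rw [lintegral_const_mul _ (hu k).ennreal_ofReal]
    grw [hint k, ← mul_assoc, ENNReal.inv_mul_cancel (by exact_mod_cast hk)
      (ENNReal.natCast_ne_top k), one_mul]
  calc ENNReal.ofReal c = ∫⁻ x, liminf (fun k => f k x) atTop ∂μ := by
        rw [lintegral_congr_ae (hf_lim.mono fun x hx => hx.liminf_eq), lintegral_const,
          measure_univ, mul_one]
    _ ≤ liminf (fun k => ∫⁻ x, f k x ∂μ) atTop :=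
        lintegral_liminf_le fun k => (hu k).ennreal_ofReal.const_mul _
    _ ≤ H := liminf_le_of_frequently_le' (frequently_atTop.2 fun k => ⟨k + 1, by omega,
        hf_int _ k.succ_ne_zero⟩)

lemma mul_log_inv_le_pmfEntropy {μ : Measure ℝ} [IsProbabilityMeasure μ] {q : PMF ℝ}
    (hq : q.support.Finite) {β : ℝ} (hβ : β ∈ Ioo 0 1)
    (hdec : μ = Measure.sum fun s => q s • μ.map fun x => s + β * x)
    {R : ℝ} (hR0 : 0 < R) (hR : ∀ᵐ x ∂μ, μ (closedBall x R) = 1) {d : ℝ}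
    (hdim : ∀ᵐ x ∂μ, Tendsto
      (fun r => Real.log (μ (closedBall x r)).toReal / Real.log r) (𝓝[>] 0) (𝓝 d)) :
    d * Real.log β⁻¹ ≤ pmfEntropy q := by
  rw [← ENNReal.ofReal_le_ofReal_iff q.pmfEntropy_nonneg, q.ofReal_pmfEntropy hq]
  exact ofReal_le_of_lintegral_le_nat_mul (fun k => measurable_negLogBallMass _)
    (lintegral_negLogBallMass_le hdec hβ.1 hR0 hR)
    (hdim.mono fun x hx => tendsto_neg_log_div_nat_of_tendsto_log_div_log hx hR0 hβ)

theorem stmt19_general {m : ℕ} (a : Fin m → ℤ)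
    (ξ : PMF (Fin m))
    (lam : ℝ) (hlam : lam ∈ Set.Ioo (0 : ℝ) 1)
    (μ : Measure ℝ) [IsProbabilityMeasure μ]
    (hself : μ = ∑ j, ξ j • μ.map fun x => lam * x + ((a j : ℤ) : ℝ))
    (d : ℝ)
    (hdim : ∀ᵐ x ∂μ, Tendsto
      (fun r => Real.log (μ (Metric.closedBall x r)).toReal / Real.log r)
      (nhdsWithin 0 (Set.Ioi 0)) (nhds d)) :
    ∀ n : ℕ, 1 ≤ n →
      d ≤ pmfEntropy (truncLaw ξ lam a n) / ((n : ℝ) * Real.log lam⁻¹) := by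
  intro n hn
  obtain ⟨hlam0, hlam1⟩ := hlam
  set c := (∑ j, |(a j : ℝ)|) / (1 - lam) + 1
  have hc : 0 < c := by
    have : 0 ≤ (∑ j, |(a j : ℝ)|) / (1 - lam) :=
      div_nonneg (Finset.sum_nonneg fun j _ => abs_nonneg _) (sub_pos.2 hlam1).le
    positivity
  have hsupp : ∀ᵐ x ∂μ, |x| ≤ c :=
    ae_abs_le_of_selfSimilar ⟨hlam0, hlam1⟩ hself
      (fun j => Finset.single_le_sum (f := fun i => |(a i : ℝ)|) (fun i _ => abs_nonneg _)
        (Finset.mem_univ j)) (lt_add_one _)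
  have hbound := mul_log_inv_le_pmfEntropy (truncLaw_support_finite n)
    ⟨pow_pos hlam0 n, pow_lt_one₀ hlam0.le hlam1 (by omega)⟩ (eq_sum_truncLaw_smul_map hself n)
    (by positivity) (ae_measure_closedBall_eq_one hsupp) hdim
  rw [← inv_pow, Real.log_pow] at hbound
  rw [le_div_iff₀ (mul_pos (by exact_mod_cast hn) (Real.log_pos (one_lt_inv₀ hlam0 |>.2 hlam1)))]
  linarith

/-- For the self-similar measure `μ_λ` of the IFS `{x ↦ λx + a_j}` with distinct integer
translations and weights `p_j`: `dim μ_λ ≤ H(μ_λ^{(n)}) / (n log λ⁻¹)` for all `n ≥ 1`,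
where `dim` is the exact dimension of `μ_λ`. -/
theorem stmt19 {m : ℕ} (a : Fin m → ℤ) (ha : Function.Injective a)
    (ξ : PMF (Fin m)) (hξ : ∀ j, ξ j ≠ 0)
    (lam : ℝ) (hlam : lam ∈ Set.Ioo (0 : ℝ) 1)
    (μ : Measure ℝ) [IsProbabilityMeasure μ]
    (hself : μ = ∑ j, ξ j • μ.map fun x => lam * x + ((a j : ℤ) : ℝ))
    (d : ℝ)
    (hdim : ∀ᵐ x ∂μ, Tendsto
      (fun r => Real.log (μ (Metric.closedBall x r)).toReal / Real.log r)
      (nhdsWithin 0 (Set.Ioi 0)) (nhds d)) :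
    ∀ n : ℕ, 1 ≤ n →
      d ≤ pmfEntropy (truncLaw ξ lam a n) / ((n : ℝ) * Real.log lam⁻¹) :=
  stmt19_general a ξ lam hlam μ hself d hdim
end
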